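/- arXiv:2010.05015 — 3 statements merged into one kernel-verified Lean document; each statement's English description precedes it below -/
import Mathlib

section
/- For every m ∈ ℕ, the function x ↦ conj(Q_m(x)) is right anti-hyperholomorphic on ℍ: at every point, ∂(conj Q_m)/∂x₀ − (∂(conj Q_m)/∂x₁)·e₁ − (∂(conj Q_m)/∂x₂)·e₂ − (∂(conj Q_m)/∂x₃)·e₃ = 0, where the imaginary units multiply on the right. -/
open Quaternion

noncomputable section

/-- The quaternion unit `e₁`. -/
def e1 : ℍ[ℝ] := ⟨0, 1, 0, 0⟩

/-- The quaternion unit `e₂`. -/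
def e2 : ℍ[ℝ] := ⟨0, 0, 1, 0⟩

/-- The quaternion unit `e₃`. -/
def e3 : ℍ[ℝ] := ⟨0, 0, 0, 1⟩

/-- The coefficients `T^m_j = 2(m-j+1)/((m+1)(m+2))`. -/
def appellT (m j : ℕ) : ℝ :=
  (2 * ((m : ℝ) - (j : ℝ) + 1)) / (((m : ℝ) + 1) * ((m : ℝ) + 2))

/-- The `m`-th quaternionic Appell polynomial
`Q_m(x) = Σ_{j=0}^m T^m_j x^{m-j} x̄^j`. -/
def appellQ (m : ℕ) (x : ℍ[ℝ]) : ℍ[ℝ] :=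
  ∑ j ∈ Finset.range (m + 1), appellT m j • (x ^ (m - j) * (star x) ^ j)

/-! The derivative of a monomial `y ↦ yᵃ ȳᵇ` is a sum of sandwiches `v ↦ p v q` and `v ↦ p v̄ q`.
Since `e₁ q e₁ + e₂ q e₂ + e₃ q e₃ = -q - 2q̄`, the operator `L ↦ L 1 - Σ L(eᵢ) eᵢ` sends these to
`2(pq + pq̄)` and `-2pq̄`. As `x` and `x̄` commute, applying it to the derivative of
`conj Q_m = Σ_j T^m_j x^j x̄^(m-j)` gives a combination of the `x^(m-1-k) x̄^k`, and the coefficient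
of each one vanishes by the closed form `Σ_{j<n} T^m_j = n(2m+3-n)/((m+1)(m+2))`. -/

open Finset
open scoped RightActions

instance {R : Type*} [CommRing R] [StarRing R] [TrivialStar R] : StarModule R ℍ[R] :=
  ⟨fun r a => by rw [Quaternion.star_smul, star_trivial r]⟩

def rightAntiFueter : (ℍ[ℝ] →L[ℝ] ℍ[ℝ]) →ₗ[ℝ] ℍ[ℝ] where
  toFun L := L 1 - L e1 * e1 - L e2 * e2 - L e3 * e3
  map_add' L M := by simp only [add_apply, add_mul]; abel
  map_smul' c L := by
    simp only [smul_apply, smul_mul_assoc, RingHom.id_apply, smul_sub]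

lemma rightAntiFueter_apply (L : ℍ[ℝ] →L[ℝ] ℍ[ℝ]) :
    rightAntiFueter L = L 1 - L e1 * e1 - L e2 * e2 - L e3 * e3 := rfl

lemma units_sandwich_sum (r : ℍ[ℝ]) :
    e1 * r * e1 + e2 * r * e2 + e3 * r * e3 = -r - (2 : ℝ) • star r := by
  ext <;> simp [Quaternion.re_mul, Quaternion.imI_mul, Quaternion.imJ_mul, Quaternion.imK_mul]
    <;> simp [e1, e2, e3] <;> ring

lemma rightAntiFueter_sandwich_id (a b : ℍ[ℝ]) :
    rightAntiFueter (a •> ContinuousLinearMap.id ℝ ℍ[ℝ] <• b)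
      = (2 : ℝ) • (a * b + a * star b) := by
  calc rightAntiFueter (a •> ContinuousLinearMap.id ℝ ℍ[ℝ] <• b)
      = a * (b - (e1 * b * e1 + e2 * b * e2 + e3 * b * e3)) := by
        simp only [rightAntiFueter_apply, smul_apply,
          ContinuousLinearMap.id_apply, smul_eq_mul, op_smul_eq_mul]
        noncomm_ring
    _ = (2 : ℝ) • (a * b + a * star b) := by
        rw [units_sandwich_sum, mul_sub, mul_sub, mul_neg, mul_smul_comm]; module

lemma rightAntiFueter_sandwich_star (a b : ℍ[ℝ]) :
    rightAntiFueter (a •> ((starL' ℝ : ℍ[ℝ] ≃L[ℝ] ℍ[ℝ]) : ℍ[ℝ] →L[ℝ] ℍ[ℝ]) <• b)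
      = -((2 : ℝ) • (a * star b)) := by
  calc rightAntiFueter (a •> ((starL' ℝ : ℍ[ℝ] ≃L[ℝ] ℍ[ℝ]) : ℍ[ℝ] →L[ℝ] ℍ[ℝ]) <• b)
      = a * (b + (e1 * b * e1 + e2 * b * e2 + e3 * b * e3)) := by
        simp only [rightAntiFueter_apply, smul_apply,
          ContinuousLinearEquiv.coe_coe, starL'_apply, smul_eq_mul, op_smul_eq_mul, star_one,
          Quaternion.star_eq_neg.2 (rfl : e1.re = 0), Quaternion.star_eq_neg.2 (rfl : e2.re = 0),
          Quaternion.star_eq_neg.2 (rfl : e3.re = 0)]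
        noncomm_ring
    _ = -((2 : ℝ) • (a * star b)) := by
        rw [units_sandwich_sum]; noncomm_ring

lemma hasFDerivAt_pow_mul_star_pow (a b : ℕ) (x : ℍ[ℝ]) :
    HasFDerivAt (fun y : ℍ[ℝ] => y ^ a * star y ^ b)
      (∑ i ∈ range a, x ^ (a - 1 - i) •> ContinuousLinearMap.id ℝ ℍ[ℝ] <• (x ^ i * star x ^ b)
        + ∑ i ∈ range b, (x ^ a * star x ^ (b - 1 - i)) •>
            ((starL' ℝ : ℍ[ℝ] ≃L[ℝ] ℍ[ℝ]) : ℍ[ℝ] →L[ℝ] ℍ[ℝ]) <• star x ^ i) x := by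
  have h := ((hasFDerivAt_id (𝕜 := ℝ) x).fun_pow' a).mul'
    ((hasFDerivAt_id (𝕜 := ℝ) x).star.fun_pow' b)
  refine h.congr_fderiv (ContinuousLinearMap.ext fun v => ?_)
  simp [mul_sum, sum_mul, mul_assoc, add_comm]

lemma rightAntiFueter_fderiv_pow_mul_star_pow (a b : ℕ) (x : ℍ[ℝ]) :
    rightAntiFueter (fderiv ℝ (fun y : ℍ[ℝ] => y ^ a * star y ^ b) x)
      = (2 : ℝ) • ((a : ℝ) • (x ^ (a - 1) * star x ^ b)
          + ∑ i ∈ range a, x ^ (a + b - 1 - i) * star x ^ i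
          - ∑ i ∈ range b, x ^ (a + b - 1 - i) * star x ^ i) := by
  have hx : Commute (star x) x := IsStarNormal.star_comm_self
  have h_id : ∀ i ∈ range a,
      x ^ (a - 1 - i) * (x ^ i * star x ^ b) = x ^ (a - 1) * star x ^ b := by
    intro i hi
    rw [mem_range] at hi
    rw [← mul_assoc, ← pow_add, Nat.sub_add_cancel (by omega)]
  have h_id_star : ∀ i ∈ range a,
      x ^ (a - 1 - i) * star (x ^ i * star x ^ b) = x ^ (a + b - 1 - i) * star x ^ i := by
    intro i hi
    rw [mem_range] at hi
    rw [star_mul, star_pow, star_pow, star_star, ← mul_assoc, ← pow_add]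
    congr 2
    omega
  have h_star : ∑ i ∈ range b, x ^ a * star x ^ (b - 1 - i) * star (star x ^ i)
      = ∑ i ∈ range b, x ^ (a + b - 1 - i) * star x ^ i := by
    rw [← sum_range_reflect]
    refine sum_congr rfl fun i hi => ?_
    rw [mem_range] at hi
    rw [star_pow, star_star, mul_assoc, (hx.pow_pow _ _).eq, ← mul_assoc, ← pow_add]
    congr 2 <;> omega
  rw [(hasFDerivAt_pow_mul_star_pow a b x).fderiv, map_add, map_sum, map_sum]
  simp only [rightAntiFueter_sandwich_id, rightAntiFueter_sandwich_star, smul_add,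
    sum_add_distrib, sum_neg_distrib, ← smul_sum]
  rw [sum_congr rfl h_id, sum_congr rfl h_id_star, h_star, sum_const,
    card_range, ← Nat.cast_smul_eq_nsmul ℝ]
  module

lemma sum_range_appellT (m n : ℕ) :
    ∑ j ∈ range n, appellT m j
      = n * (2 * m + 3 - n) / ((m + 1) * (m + 2)) := by
  induction n with
  | zero => simp
  | succ n ih =>
      rw [sum_range_succ, ih, appellT]
      field_simp
      push_cast
      ring

lemma appellT_coeff_eq_zero (m k : ℕ) (hk : k ≤ m) :
    ((m - k : ℕ) : ℝ) * appellT m (m - k) + ∑ j ∈ Ico (k + 1) (m + 1), appellT m j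
      - ∑ j ∈ range (m - k), appellT m j = 0 := by
  rw [sum_Ico_eq_sub _ (by omega), sum_range_appellT, sum_range_appellT,
    sum_range_appellT, appellT, Nat.cast_sub hk]
  field_simp
  push_cast
  ring

lemma sum_appellT_smul_eq_zero {M : Type*} [AddCommGroup M] [Module ℝ M] (m : ℕ) (P : ℕ → M) :
    ∑ j ∈ range (m + 1), appellT m j •
      ((j : ℝ) • P (m - j) + ∑ i ∈ range j, P i - ∑ i ∈ range (m - j), P i) = 0 := by
  have h_tail : ∑ j ∈ range (m + 1), ∑ i ∈ range j, appellT m j • P i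
      = ∑ k ∈ range (m + 1), (∑ j ∈ Ico (k + 1) (m + 1), appellT m j) • P k := by
    rw [sum_comm' (t' := range (m + 1)) (s' := fun k => Ico (k + 1) (m + 1))
      (fun j k => by simp only [mem_range, mem_Ico]; omega)]
    simp only [sum_smul]
  have h_head : ∑ j ∈ range (m + 1), ∑ i ∈ range (m - j), appellT m j • P i
      = ∑ k ∈ range (m + 1), (∑ j ∈ range (m - k), appellT m j) • P k := by
    rw [sum_comm' (t' := range (m + 1)) (s' := fun k => range (m - k))
      (fun j k => by simp only [mem_range]; omega)]
    simp only [sum_smul]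
  have h_diag : ∑ j ∈ range (m + 1), appellT m j • (j : ℝ) • P (m - j)
      = ∑ k ∈ range (m + 1), (((m - k : ℕ) : ℝ) * appellT m (m - k)) • P k := by
    rw [← sum_range_reflect]
    refine sum_congr rfl fun k hk => ?_
    rw [mem_range] at hk
    rw [show m + 1 - 1 - k = m - k by omega, show m - (m - k) = k by omega, smul_smul, mul_comm]
  simp only [smul_add, smul_sub, smul_sum, sum_add_distrib, sum_sub_distrib]
  rw [h_tail, h_head, h_diag, ← sum_add_distrib, ← sum_sub_distrib]
  refine sum_eq_zero fun k hk => ?_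
  rw [← add_smul, ← sub_smul, appellT_coeff_eq_zero m k (Nat.lt_succ_iff.1 (mem_range.1 hk)), zero_smul]

lemma star_appellQ (m : ℕ) (x : ℍ[ℝ]) :
    star (appellQ m x) = ∑ j ∈ range (m + 1), appellT m j • (x ^ j * star x ^ (m - j)) := by
  simp only [appellQ, star_sum, Quaternion.star_smul, star_mul, star_pow, star_star]

/-- `conj Q_m` is right anti-hyperholomorphic on `ℍ`:
`∂(conj Q_m)/∂x₀ - (∂(conj Q_m)/∂x₁)e₁ - (∂(conj Q_m)/∂x₂)e₂ - (∂(conj Q_m)/∂x₃)e₃ = 0`,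
the units multiplying on the right. -/
theorem conj_appellQ_right_anti_hyperholomorphic (m : ℕ) (x : ℍ[ℝ]) :
    fderiv ℝ (fun y => star (appellQ m y)) x 1
      - fderiv ℝ (fun y => star (appellQ m y)) x e1 * e1
      - fderiv ℝ (fun y => star (appellQ m y)) x e2 * e2
      - fderiv ℝ (fun y => star (appellQ m y)) x e3 * e3 = 0 := by
  have hderiv : HasFDerivAt (fun y => star (appellQ m y)) (∑ j ∈ range (m + 1),
      appellT m j • fderiv ℝ (fun y : ℍ[ℝ] => y ^ j * star y ^ (m - j)) x) x := by
    simp only [star_appellQ]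
    exact HasFDerivAt.fun_sum fun j _ =>
      (hasFDerivAt_pow_mul_star_pow j (m - j) x).differentiableAt.hasFDerivAt.fun_const_smul _
  let P : ℕ → ℍ[ℝ] := fun i => x ^ (m - 1 - i) * star x ^ i
  calc _ = rightAntiFueter (fderiv ℝ (fun y => star (appellQ m y)) x) := rfl
    _ = (2 : ℝ) • ∑ j ∈ range (m + 1), appellT m j •
          ((j : ℝ) • P (m - j) + ∑ i ∈ range j, P i - ∑ i ∈ range (m - j), P i) := by
      rw [hderiv.fderiv, map_sum, smul_sum]
      refine sum_congr rfl fun j hj => ?_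
      rw [mem_range] at hj
      rw [map_smul, rightAntiFueter_fderiv_pow_mul_star_pow, Nat.add_sub_cancel' (by omega),
        show j - 1 = m - 1 - (m - j) by omega, smul_comm]
    _ = 0 := by rw [sum_appellT_smul_eq_zero, smul_zero]
end
end

section
/- Let b, d : ℕ → ℍ and let ε > 0 be such that for every x ∈ ℍ with |x| < ε both series Σ_{n=0}^∞ P_n(x)·b_n and Σ_{n=0}^∞ P_n(x)·d_n converge and their sums coincide. Then b_n = d_n for every n. (In particular, a real analytic function f(x₀) = Σ_{n} x₀ⁿ·a_n near the origin has at most one — namely f(x) = Σ_n P_n(x)·(a_n/3ⁿ) — extension of the form Σ_n P_n(x)·b_n.) -/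
/-!
On the real axis every `P_n` is a real monomial, `P_n(t) = t ^ n / c_n`, so subtracting the
two expansions at real points `t ∈ (-ε, ε)` leaves a real power series
`∑ t ^ n • (b_n - d_n) / c_n` with sum `0`. By the identity theorem for power series its
coefficients vanish, and `c_n = (2n + 3 + (-1)^n) / (2(n + 1)(n + 2)) > 0`.
-/

open Quaternion

noncomputable section

/-- The normalizing constants `c_m = Σ_{j=0}^m (-1)^j T^m_j`. -/
def appellc (m : ℕ) : ℝ := ∑ j ∈ Finset.range (m + 1), (-1 : ℝ) ^ j * appellT m j

/-- The polynomials `P_m = Q_m / c_m`. -/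
def appellP (m : ℕ) (x : ℍ[ℝ]) : ℍ[ℝ] := (appellc m)⁻¹ • appellQ m x

open scoped ENNReal

theorem eq_zero_of_hasSum_pow_smul {𝕜 E : Type*} [NontriviallyNormedField 𝕜]
    [NormedAddCommGroup E] [NormedSpace 𝕜 E] {a : ℕ → E} {ε : ℝ} (hε : 0 < ε)
    (h : ∀ t : 𝕜, ‖t‖ < ε → HasSum (fun n => t ^ n • a n) 0) : a = 0 := by
  let p : FormalMultilinearSeries 𝕜 𝕜 E := fun n =>
    ContinuousMultilinearMap.mkPiRing 𝕜 (Fin n) (a n)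
  have hp : ∀ n t, (p n fun _ => t) = t ^ n • a n := fun n t => by
    simp [p, ContinuousMultilinearMap.mkPiRing_apply]
  obtain ⟨t₀, ht₀_pos, ht₀_lt⟩ := NormedField.exists_norm_lt 𝕜 hε
  have hrad : (‖t₀‖₊ : ℝ≥0∞) ≤ p.radius := by
    refine p.le_radius_of_tendsto (l := 0) ?_
    simpa [p, ContinuousMultilinearMap.norm_mkPiRing, norm_smul, mul_comm] using
      (h t₀ ht₀_lt).summable.tendsto_atTop_zero.norm
  have hball : HasFPowerSeriesOnBall 0 p 0 ‖t₀‖₊ := by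
    refine ⟨hrad, by simpa using ht₀_pos, fun {t} ht => ?_⟩
    have ht' : ‖t‖ < ‖t₀‖ := by simpa using ht
    simpa [hp] using h t (ht'.trans ht₀_lt)
  funext n
  simpa [hp] using hball.hasFPowerSeriesAt.apply_eq_zero n 1

lemma sum_range_natCast_sub_add_one (m : ℕ) :
    ∑ j ∈ Finset.range (m + 1), ((m : ℝ) - j + 1) =
      ((m : ℝ) + 1) * ((m : ℝ) + 2) / 2 := by
  induction m with
  | zero => simp
  | succ m ih =>
    rw [Finset.sum_range_succ]
    have h : ∀ j ∈ Finset.range (m + 1),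
        (((m + 1 : ℕ) : ℝ) - j + 1) = ((m : ℝ) - j + 1) + 1 :=
      fun j _ => by push_cast; ring
    rw [Finset.sum_congr rfl h, Finset.sum_add_distrib, ih]
    simp only [Finset.sum_const, Finset.card_range, nsmul_eq_mul, mul_one]
    push_cast; ring

lemma sum_range_neg_one_pow_mul_natCast_sub_add_one (m : ℕ) :
    ∑ j ∈ Finset.range (m + 1), (-1 : ℝ) ^ j * ((m : ℝ) - j + 1) =
      (2 * m + 3 + (-1 : ℝ) ^ m) / 4 := by
  induction m with
  | zero => norm_num
  | succ m ih =>
    rw [Finset.sum_range_succ']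
    have h : ∀ j ∈ Finset.range (m + 1),
        (-1 : ℝ) ^ (j + 1) * (((m + 1 : ℕ) : ℝ) - ((j + 1 : ℕ) : ℝ) + 1) =
          -((-1 : ℝ) ^ j * ((m : ℝ) - j + 1)) :=
      fun j _ => by push_cast; ring
    rw [Finset.sum_congr rfl h, Finset.sum_neg_distrib, ih]
    push_cast; ring

lemma sum_appellT (m : ℕ) : ∑ j ∈ Finset.range (m + 1), appellT m j = 1 := by
  have hm : ((m : ℝ) + 1) * ((m : ℝ) + 2) ≠ 0 := by positivity
  simp only [appellT]
  rw [← Finset.sum_div, div_eq_one_iff_eq hm, ← Finset.mul_sum,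
    sum_range_natCast_sub_add_one]
  ring

lemma appellc_eq (m : ℕ) :
    appellc m = (2 * m + 3 + (-1 : ℝ) ^ m) / (2 * (((m : ℝ) + 1) * ((m : ℝ) + 2))) := by
  have h := sum_range_neg_one_pow_mul_natCast_sub_add_one m
  simp only [appellc, appellT, mul_div_assoc', ← Finset.sum_div]
  simp only [mul_left_comm _ (2 : ℝ), ← Finset.mul_sum, h]
  field_simp
  ring

lemma appellc_pos (m : ℕ) : 0 < appellc m := by
  rw [appellc_eq]
  have h_pow : (-1 : ℝ) ≤ (-1) ^ m := by
    rcases neg_one_pow_eq_or ℝ m with h | h <;> norm_num [h]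
  have hm : (0 : ℝ) ≤ m := m.cast_nonneg
  apply div_pos <;> nlinarith

lemma appellP_ofReal (m : ℕ) (t : ℝ) :
    appellP m (t : ℍ[ℝ]) = ((appellc m)⁻¹ * t ^ m : ℝ) := by
  have h : ∀ j ∈ Finset.range (m + 1),
      appellT m j • ((t : ℍ[ℝ]) ^ (m - j) * star (t : ℍ[ℝ]) ^ j) =
        appellT m j • ((t ^ m : ℝ) : ℍ[ℝ]) := by
    intro j hj
    rw [Quaternion.star_coe, ← Quaternion.coe_pow, ← Quaternion.coe_pow, ← Quaternion.coe_mul,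
      ← pow_add, Nat.sub_add_cancel (Finset.mem_range_succ_iff.mp hj)]
  rw [appellP, appellQ, Finset.sum_congr rfl h, ← Finset.sum_smul, sum_appellT, one_smul,
    ← Quaternion.coe_smul, smul_eq_mul]

/-- Uniqueness of the coefficients of expansions along the polynomials `P_n`:
if `Σ_n P_n(x) b_n` and `Σ_n P_n(x) d_n` both converge and coincide on a ball
around the origin, then `b_n = d_n` for every `n`. -/
theorem appellP_coefficients_unique (b d : ℕ → ℍ[ℝ]) (ε : ℝ) (hε : 0 < ε)
    (hb : ∀ x : ℍ[ℝ], ‖x‖ < ε → Summable fun n => appellP n x * b n)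
    (hd : ∀ x : ℍ[ℝ], ‖x‖ < ε → Summable fun n => appellP n x * d n)
    (heq : ∀ x : ℍ[ℝ], ‖x‖ < ε →
      (∑' n, appellP n x * b n) = ∑' n, appellP n x * d n) :
    ∀ n, b n = d n := by
  have hsum : ∀ t : ℝ, ‖t‖ < ε →
      HasSum (fun n => t ^ n • ((appellc n)⁻¹ • (b n - d n))) 0 := by
    intro t ht
    rw [← Quaternion.norm_coe] at ht
    have h := ((hb _ ht).hasSum.sub (hd _ ht).hasSum)
    rw [heq _ ht, sub_self] at h
    have hterm : ∀ n, appellP n t * b n - appellP n t * d n =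
        t ^ n • ((appellc n)⁻¹ • (b n - d n)) := fun n => by
      rw [← mul_sub, appellP_ofReal, Quaternion.coe_mul_eq_smul, smul_smul, mul_comm]
    simpa only [hterm] using h
  intro n
  have h := congrFun (eq_zero_of_hasSum_pow_smul hε hsum) n
  simpa [sub_eq_zero, (appellc_pos n).ne'] using h
end
end

section
/- Let S_n ∈ ℍ (n ∈ ℕ) be such that the lower triangular Toeplitz operator (S_{j−k})_{j≥k} is a contraction on ℓ²(ℕ, ℍ): for every finitely supported f : ℕ → ℍ, Σ_{n=0}^∞ |Σ_{k=0}^n S_{n−k}·f_k|² ≤ Σ_{k=0}^∞ |f_k|² (i.e. S = Σ_n P_n·S_n is a quaternionic Schur multiplier), and assume |S₀| < 1. For t ∈ (−1,1) set s(t) = Σ_{n=0}^∞ S_n·tⁿ (which converges, and 1 − conj(S₀)·s(t) ≠ 0). Then there exists a sequence S'_n ∈ ℍ whose lower triangular Toeplitz operator (S'_{j−k})_{j≥k} is also a contraction on ℓ²(ℕ, ℍ), such that for every t ∈ (−1,1) with t ≠ 0, Σ_{n=0}^∞ S'_n·tⁿ = t⁻¹·(s(t) − S₀)·(1 − conj(S₀)·s(t))⁻¹.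 (This is the Schur algorithm step: since P_n(x₀) = (3x₀)ⁿ for real x₀, the function S⁽¹⁾(3x₀) = (1/(3x₀))·(S(3x₀) − S(0))·(1 − conj(S(0))·S(3x₀))⁻¹ extends to a Schur multiplier.) -/
open Quaternion

noncomputable section

/-!
Put `F = mk S`, `a = S 0` and `D = 1 - C (star a) * F`, a unit of `ℍ⟦X⟧` because `‖a‖ < 1`.
The new sequence `S'` is the coefficient sequence of `X⁻¹ (F - C a) D⁻¹`.

For quaternions `‖h - a g‖² = ‖g - ā h‖² - (1 - ‖a‖²)(‖g‖² - ‖h‖²)`. Applied to the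
coefficients of `g` and `h = F g` and summed, it shows that a contractive `F` makes
`(F - C a) g` no larger than `D g` in every truncated `ℓ²` norm. With `g = D⁻¹ f` this is
the contractivity of `S'`.

On `(-1, 1)` all the series involved converge absolutely. This holds for `D⁻¹` as well,
since `(1 - ‖a‖²) D⁻¹ = 1 + ā X S'` has bounded coefficients. So evaluation at `t` is
multiplicative by the Cauchy product, and the formal identities `D D⁻¹ = 1` and
`S' = X⁻¹ (F - C a) D⁻¹` turn into the claimed formula.
-/

open PowerSeries
open Finset hiding mk

theorem PowerSeries.coeff_mul_eq_sum_range {R : Type*} [Semiring R] (φ ψ : R⟦X⟧) (n : ℕ) :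
    coeff n (φ * ψ) = ∑ k ∈ range (n + 1), coeff (n - k) φ * coeff k ψ := by
  rw [coeff_mul, ← Nat.sum_antidiagonal_swap]
  exact Nat.sum_antidiagonal_eq_sum_range_succ (fun i j => coeff j φ * coeff i ψ) n

theorem PowerSeries.coeff_mul_trunc {R : Type*} [Semiring R] (φ ψ : R⟦X⟧) {n N : ℕ}
    (h : n < N) : coeff n (φ * (trunc N ψ : R⟦X⟧)) = coeff n (φ * ψ) := by
  simp only [coeff_mul_eq_sum_range, Polynomial.coeff_coe, coeff_trunc]
  exact sum_congr rfl fun k hk => by rw [if_pos (by grind)]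

theorem PowerSeries.mk_sub_C_eq_X_mul {R : Type*} [Ring R] (Y : ℕ → R) :
    mk Y - C (Y 0) = X * mk fun n => Y (n + 1) := by
  simpa using sub_const_eq_X_mul_shift (mk Y)

theorem Finsupp.sum_range_norm_sq_le {R : Type*} [NormedAddCommGroup R] (f : ℕ →₀ R) (N : ℕ) :
    ∑ n ∈ range N, ‖f n‖ ^ 2 ≤ ∑ k ∈ f.support, ‖f k‖ ^ 2 := by
  classical
  calc ∑ n ∈ range N, ‖f n‖ ^ 2 ≤ ∑ k ∈ range N ∪ f.support, ‖f k‖ ^ 2 :=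
        sum_le_sum_of_subset_of_nonneg subset_union_left fun _ _ _ => by positivity
    _ = ∑ k ∈ f.support, ‖f k‖ ^ 2 :=
        (sum_subset subset_union_right fun k _ hk => by
          simp [Finsupp.notMem_support_iff.mp hk]).symm

theorem PowerSeries.norm_coeff_one_le {R : Type*} [NormedRing R] [NormOneClass R] (n : ℕ) :
    ‖coeff n (1 : R⟦X⟧)‖ ≤ 1 := by
  rw [coeff_one]; split_ifs <;> simp

def IsToeplitzContraction {R : Type*} [NormedRing R] (S : ℕ → R) : Prop :=
  ∀ f : ℕ →₀ R, ∀ M : ℕ,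
    ∑ n ∈ range M, ‖∑ k ∈ range (n + 1), S (n - k) * f k‖ ^ 2 ≤ ∑ k ∈ f.support, ‖f k‖ ^ 2

theorem isToeplitzContraction_iff_coeff_mul_mk {R : Type*} [NormedRing R] {S : ℕ → R} :
    IsToeplitzContraction S ↔ ∀ (f : ℕ →₀ R) (M : ℕ),
      ∑ n ∈ range M, ‖coeff n (mk S * mk f)‖ ^ 2 ≤ ∑ k ∈ f.support, ‖f k‖ ^ 2 := by
  simp only [IsToeplitzContraction, coeff_mul_eq_sum_range, coeff_mk]

namespace IsToeplitzContraction

variable {R : Type*} [NormedRing R] {S : ℕ → R}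

theorem sum_norm_sq_coeff_mul_le (hS : IsToeplitzContraction S) (g : R⟦X⟧) (N : ℕ) :
    ∑ n ∈ range N, ‖coeff n (mk S * g)‖ ^ 2 ≤ ∑ n ∈ range N, ‖coeff n g‖ ^ 2 := by
  set p := trunc N g
  have hp : mk p.toFinsupp.coeff = (p : R⟦X⟧) := by
    ext n; simp [Polynomial.toFinsupp_apply]
  have key := isToeplitzContraction_iff_coeff_mul_mk.mp hS p.toFinsupp.coeff N
  rw [hp, Polynomial.support_toFinsupp] at key
  have hsupp : p.support ⊆ range N := fun k hk => by
    rw [Polynomial.mem_support_iff, coeff_trunc] at hk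
    exact mem_range.mpr (by_contra fun h => hk (if_neg h))
  calc ∑ n ∈ range N, ‖coeff n (mk S * g)‖ ^ 2
      = ∑ n ∈ range N, ‖coeff n (mk S * (p : R⟦X⟧))‖ ^ 2 :=
        sum_congr rfl fun n hn => by rw [coeff_mul_trunc _ _ (mem_range.mp hn)]
    _ ≤ ∑ k ∈ p.support, ‖p.coeff k‖ ^ 2 := by simpa [Polynomial.toFinsupp_apply] using key
    _ ≤ ∑ k ∈ range N, ‖p.coeff k‖ ^ 2 :=
        sum_le_sum_of_subset_of_nonneg hsupp fun _ _ _ => by positivity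
    _ = ∑ n ∈ range N, ‖coeff n g‖ ^ 2 :=
        sum_congr rfl fun n hn => by rw [coeff_trunc, if_pos (mem_range.mp hn)]

theorem norm_le_one [NormOneClass R] (hS : IsToeplitzContraction S) (n : ℕ) : ‖S n‖ ≤ 1 := by
  have h := hS.sum_norm_sq_coeff_mul_le 1 (n + 1)
  simp only [mul_one, coeff_mk, coeff_one] at h
  have : ‖S n‖ ^ 2 ≤ 1 := by
    refine (single_le_sum (fun m _ => by positivity) (self_mem_range_succ n)).trans (h.trans ?_)
    simp [apply_ite]
  exact (sq_le_one_iff₀ (norm_nonneg _)).mp this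

end IsToeplitzContraction

section Evaluation

variable {A : Type*} [NormedRing A] [NormedAlgebra ℝ A] {t : ℝ}

def PowerSeries.evalAt (t : ℝ) (φ : A⟦X⟧) : A :=
  ∑' n, t ^ n • coeff n φ

theorem summable_norm_pow_smul_of_norm_le {Y : ℕ → A} {C : ℝ} (hY : ∀ n, ‖Y n‖ ≤ C)
    (ht : |t| < 1) : Summable fun n => ‖t ^ n • Y n‖ := by
  refine .of_nonneg_of_le (fun n => norm_nonneg _) (fun n => ?_)
    ((summable_geometric_of_lt_one (abs_nonneg t) ht).mul_right C)
  rw [norm_smul, norm_pow, Real.norm_eq_abs]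
  exact mul_le_mul_of_nonneg_left (hY n) (by positivity)

theorem tsum_pow_smul_eq_add {Y : ℕ → A} (h : Summable fun n => t ^ n • Y n) :
    ∑' n, t ^ n • Y n = Y 0 + t • ∑' n, t ^ n • Y (n + 1) := by
  rw [h.tsum_eq_zero_add, pow_zero, one_smul, ← tsum_const_smul'']
  simp only [smul_smul, pow_succ']

namespace PowerSeries

theorem evalAt_mk (Y : ℕ → A) : evalAt t (mk Y) = ∑' n, t ^ n • Y n := by
  simp only [evalAt, coeff_mk]

theorem hasSum_pow_smul_coeff_C (x : A) : HasSum (fun n => t ^ n • coeff n (C x)) x := by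
  convert hasSum_single 0 fun n hn => ?_ using 1
  · simp
  · rw [coeff_C, if_neg hn, smul_zero]

theorem evalAt_C (x : A) : evalAt t (C x) = x :=
  (hasSum_pow_smul_coeff_C x).tsum_eq

theorem evalAt_one : evalAt t (1 : A⟦X⟧) = 1 := by
  rw [← map_one C, evalAt_C]

theorem evalAt_sub {φ ψ : A⟦X⟧} (hφ : Summable fun n => t ^ n • coeff n φ)
    (hψ : Summable fun n => t ^ n • coeff n ψ) :
    evalAt t (φ - ψ) = evalAt t φ - evalAt t ψ := by
  simp only [evalAt, map_sub, smul_sub, hφ.tsum_sub hψ]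

theorem summable_pow_smul_coeff_C_mul {φ : A⟦X⟧} (x : A)
    (hφ : Summable fun n => t ^ n • coeff n φ) :
    Summable fun n => t ^ n • coeff n (C x * φ) := by
  simpa only [coeff_C_mul, mul_smul_comm] using hφ.mul_left x

theorem evalAt_C_mul {φ : A⟦X⟧} (x : A) (hφ : Summable fun n => t ^ n • coeff n φ) :
    evalAt t (C x * φ) = x * evalAt t φ := by
  simp only [evalAt, coeff_C_mul, ← mul_smul_comm, hφ.tsum_mul_left]

theorem evalAt_mul [CompleteSpace A] {φ ψ : A⟦X⟧} (hφ : Summable fun n => ‖t ^ n • coeff n φ‖)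
    (hψ : Summable fun n => ‖t ^ n • coeff n ψ‖) :
    evalAt t (φ * ψ) = evalAt t φ * evalAt t ψ := by
  rw [evalAt, evalAt, evalAt, tsum_mul_tsum_eq_tsum_sum_antidiagonal_of_summable_norm hφ hψ]
  refine tsum_congr fun n => ?_
  rw [coeff_mul, smul_sum]
  refine sum_congr rfl fun p hp => ?_
  rw [smul_mul_smul_comm, ← pow_add, mem_antidiagonal.mp hp]

end PowerSeries

end Evaluation

namespace Quaternion

theorem norm_sub_mul_sq (a g h : ℍ[ℝ]) :
    ‖h - a * g‖ ^ 2 = ‖g - star a * h‖ ^ 2 - (1 - ‖a‖ ^ 2) * (‖g‖ ^ 2 - ‖h‖ ^ 2) := by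
  simp only [sq, ← normSq_eq_norm_mul_self, normSq_def', re_sub, imI_sub, imJ_sub, imK_sub,
    re_mul, imI_mul, imJ_mul, imK_mul, re_star, imI_star, imJ_star, imK_star]
  ring

theorem norm_one_sub_star_mul_self {a : ℍ[ℝ]} (ha : ‖a‖ ≤ 1) :
    ‖1 - star a * a‖ = 1 - ‖a‖ ^ 2 := by
  rw [star_mul_self, ← coe_one, ← coe_sub, norm_coe, normSq_eq_norm_mul_self, ← sq,
    Real.norm_eq_abs, abs_of_nonneg (by nlinarith [norm_nonneg a])]

end Quaternion

section SchurStep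

variable {S : ℕ → ℍ[ℝ]}

theorem IsToeplitzContraction.sum_norm_sq_coeff_sub_C_mul_le (hS : IsToeplitzContraction S)
    {a : ℍ[ℝ]} (ha : ‖a‖ ≤ 1) (g : ℍ[ℝ]⟦X⟧) (N : ℕ) :
    ∑ n ∈ range N, ‖coeff n ((mk S - C a) * g)‖ ^ 2 ≤
      ∑ n ∈ range N, ‖coeff n ((1 - C (star a) * mk S) * g)‖ ^ 2 := by
  have hpoint : ∀ n, ‖coeff n ((mk S - C a) * g)‖ ^ 2 =
      ‖coeff n ((1 - C (star a) * mk S) * g)‖ ^ 2 -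
        (1 - ‖a‖ ^ 2) * (‖coeff n g‖ ^ 2 - ‖coeff n (mk S * g)‖ ^ 2) := fun n => by
    rw [sub_mul, map_sub, coeff_C_mul, sub_mul, one_mul, mul_assoc, map_sub, coeff_C_mul]
    exact Quaternion.norm_sub_mul_sq a _ _
  rw [sum_congr rfl fun n _ => hpoint n, sum_sub_distrib, ← mul_sum, sum_sub_distrib]
  have ha2 : 0 ≤ 1 - ‖a‖ ^ 2 := by nlinarith [norm_nonneg a]
  exact sub_le_self _ (mul_nonneg ha2 (sub_nonneg.mpr (hS.sum_norm_sq_coeff_mul_le g N)))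

variable (S) in
def schurDenom : ℍ[ℝ]⟦X⟧ :=
  1 - C (star (S 0)) * mk S

variable (S) in
-- `Ring.inverse` is `0` on non-units; `schurDenom S` is a unit when `‖S 0‖ < 1`.
def schurStep (n : ℕ) : ℍ[ℝ] :=
  coeff n (mk (fun k => S (k + 1)) * Ring.inverse (schurDenom S))

theorem mk_schurStep :
    mk (schurStep S) = mk (fun k => S (k + 1)) * Ring.inverse (schurDenom S) :=
  PowerSeries.ext fun n => by rw [coeff_mk, schurStep]

theorem isUnit_schurDenom (h0 : ‖S 0‖ < 1) : IsUnit (schurDenom S) := by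
  rw [isUnit_iff_constantCoeff, isUnit_iff_ne_zero, ← norm_pos_iff]
  simp only [schurDenom, map_sub, map_one, map_mul, ← coeff_zero_eq_constantCoeff_apply,
    coeff_zero_C, coeff_mk]
  rw [Quaternion.norm_one_sub_star_mul_self h0.le]
  nlinarith [norm_nonneg (S 0)]

theorem schurDenom_mul_inverse (h0 : ‖S 0‖ < 1) :
    schurDenom S * Ring.inverse (schurDenom S) = 1 :=
  Ring.mul_inverse_cancel _ (isUnit_schurDenom h0)

theorem isToeplitzContraction_schurStep (hS : IsToeplitzContraction S) (h0 : ‖S 0‖ < 1) :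
    IsToeplitzContraction (schurStep S) := by
  refine isToeplitzContraction_iff_coeff_mul_mk.mpr fun f M => ?_
  set g := Ring.inverse (schurDenom S) * mk f
  have hDg : schurDenom S * g = mk f := by rw [← mul_assoc, schurDenom_mul_inverse h0, one_mul]
  have hrow : ∀ n, coeff n (mk (schurStep S) * mk f) = coeff (n + 1) ((mk S - C (S 0)) * g) :=
    fun n => by rw [mk_sub_C_eq_X_mul, mk_schurStep, mul_assoc X, coeff_succ_X_mul, mul_assoc]
  calc ∑ n ∈ range M, ‖coeff n (mk (schurStep S) * mk f)‖ ^ 2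
      = ∑ n ∈ range M, ‖coeff (n + 1) ((mk S - C (S 0)) * g)‖ ^ 2 := by simp only [hrow]
    _ ≤ ∑ n ∈ range (M + 1), ‖coeff n ((mk S - C (S 0)) * g)‖ ^ 2 := by
        rw [sum_range_succ' _ M]; exact le_add_of_nonneg_right (by positivity)
    _ ≤ ∑ n ∈ range (M + 1), ‖coeff n (schurDenom S * g)‖ ^ 2 :=
        hS.sum_norm_sq_coeff_sub_C_mul_le (hS.norm_le_one 0) g (M + 1)
    _ ≤ ∑ k ∈ f.support, ‖f k‖ ^ 2 := by
        simpa only [hDg, coeff_mk] using f.sum_range_norm_sq_le (M + 1)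

theorem C_mul_inverse_schurDenom (h0 : ‖S 0‖ < 1) :
    C (1 - star (S 0) * S 0) * Ring.inverse (schurDenom S) =
      1 + C (star (S 0)) * X * mk (schurStep S) := by
  have hD : C (1 - star (S 0) * S 0) =
      schurDenom S + C (star (S 0)) * X * mk (fun k => S (k + 1)) := by
    rw [mul_assoc, ← mk_sub_C_eq_X_mul, schurDenom, map_sub, map_one, map_mul, mul_sub]
    abel
  rw [hD, add_mul, schurDenom_mul_inverse h0, mul_assoc _ (mk _), ← mk_schurStep]

theorem IsToeplitzContraction.norm_coeff_inverse_schurDenom_le (hS : IsToeplitzContraction S)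
    (h0 : ‖S 0‖ < 1) (n : ℕ) :
    ‖coeff n (Ring.inverse (schurDenom S))‖ ≤ 2 / (1 - ‖S 0‖ ^ 2) := by
  have hc : 0 < 1 - ‖S 0‖ ^ 2 := by nlinarith [norm_nonneg (S 0)]
  have h := congrArg (coeff n) (C_mul_inverse_schurDenom h0)
  rw [coeff_C_mul, map_add, mul_assoc, coeff_C_mul] at h
  have hX : ‖coeff n (X * mk (schurStep S))‖ ≤ 1 := by
    cases n with
    | zero => simp
    | succ m =>
      rw [coeff_succ_X_mul, coeff_mk]
      exact (isToeplitzContraction_schurStep hS h0).norm_le_one m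
  rw [le_div_iff₀ hc, mul_comm, ← Quaternion.norm_one_sub_star_mul_self h0.le, ← norm_mul, h]
  calc _ ≤ ‖coeff n (1 : ℍ[ℝ]⟦X⟧)‖ + ‖star (S 0)‖ * ‖coeff n (X * mk (schurStep S))‖ :=
        (norm_add_le _ _).trans (add_le_add le_rfl (norm_mul_le _ _))
    _ ≤ 1 + 1 * 1 := by
        gcongr
        · exact norm_coeff_one_le n
        · rw [norm_star]; exact hS.norm_le_one 0
    _ = 2 := by norm_num

theorem IsToeplitzContraction.norm_coeff_schurDenom_le (hS : IsToeplitzContraction S) (n : ℕ) :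
    ‖coeff n (schurDenom S)‖ ≤ 2 := by
  rw [schurDenom, map_sub, coeff_C_mul, coeff_mk]
  calc _ ≤ ‖coeff n (1 : ℍ[ℝ]⟦X⟧)‖ + ‖star (S 0)‖ * ‖S n‖ :=
        (norm_sub_le _ _).trans (add_le_add le_rfl (norm_mul_le _ _))
    _ ≤ 1 + 1 * 1 := by
        gcongr
        · exact norm_coeff_one_le n
        · rw [norm_star]; exact hS.norm_le_one 0
        · exact hS.norm_le_one n
    _ = 2 := by norm_num

variable {t : ℝ}

theorem IsToeplitzContraction.tsum_schurStep (hS : IsToeplitzContraction S) (h0 : ‖S 0‖ < 1)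
    (ht : |t| < 1) :
    ∑' n, t ^ n • schurStep S n =
      (∑' n, t ^ n • S (n + 1)) * evalAt t (Ring.inverse (schurDenom S)) := by
  have hB := summable_norm_pow_smul_of_norm_le (Y := fun n => coeff n (mk fun k => S (k + 1)))
    (fun n => by rw [coeff_mk]; exact hS.norm_le_one (n + 1)) ht
  have hG := summable_norm_pow_smul_of_norm_le (hS.norm_coeff_inverse_schurDenom_le h0) ht
  rw [← evalAt_mk, mk_schurStep, evalAt_mul hB hG, evalAt_mk]

theorem IsToeplitzContraction.one_sub_star_mul_tsum_mul_evalAt_inverse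
    (hS : IsToeplitzContraction S) (h0 : ‖S 0‖ < 1) (ht : |t| < 1) :
    (1 - star (S 0) * ∑' n, t ^ n • S n) * evalAt t (Ring.inverse (schurDenom S)) = 1 := by
  have hF := (summable_norm_pow_smul_of_norm_le (Y := fun n => coeff n (mk S))
    (fun n => by rw [coeff_mk]; exact hS.norm_le_one n) ht).of_norm
  have hD := summable_norm_pow_smul_of_norm_le hS.norm_coeff_schurDenom_le ht
  have hG := summable_norm_pow_smul_of_norm_le (hS.norm_coeff_inverse_schurDenom_le h0) ht
  have hDt : evalAt t (schurDenom S) = 1 - star (S 0) * ∑' n, t ^ n • S n := by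
    rw [schurDenom, ← map_one C, evalAt_sub (hasSum_pow_smul_coeff_C 1).summable
      (summable_pow_smul_coeff_C_mul _ hF), evalAt_C, evalAt_C_mul _ hF, evalAt_mk]
  rw [← hDt, ← evalAt_mul hD hG, schurDenom_mul_inverse h0, evalAt_one]

end SchurStep

/-- The Schur algorithm step: if `S = Σ_n P_n S_n` is a quaternionic Schur multiplier
(i.e. the lower triangular Toeplitz operator `(S_{j-k})_{j≥k}` is a contraction on
`ℓ²(ℕ, ℍ)`) with `|S₀| < 1`, then for `t ∈ (-1,1)` the series `s(t) = Σ_n S_n tⁿ`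
converges, `1 - conj(S₀) s(t) ≠ 0`, and there is a sequence `S'` defining again a
contractive lower triangular Toeplitz operator whose generating function satisfies
`Σ_n S'_n tⁿ = t⁻¹ (s(t) - S₀)(1 - conj(S₀) s(t))⁻¹` for `t ≠ 0`. -/
theorem schur_algorithm_step (S : ℕ → ℍ[ℝ])
    (hcontr : ∀ f : ℕ →₀ ℍ[ℝ], ∀ M : ℕ,
      ∑ n ∈ Finset.range M, ‖∑ k ∈ Finset.range (n + 1), S (n - k) * f k‖ ^ 2 ≤
        ∑ k ∈ f.support, ‖f k‖ ^ 2)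
    (hS0 : ‖S 0‖ < 1) :
    (∀ t ∈ Set.Ioo (-1 : ℝ) 1, Summable fun n => t ^ n • S n) ∧
    (∀ t ∈ Set.Ioo (-1 : ℝ) 1,
      (1 : ℍ[ℝ]) - star (S 0) * (∑' n, t ^ n • S n) ≠ 0) ∧
    ∃ S' : ℕ → ℍ[ℝ],
      (∀ f : ℕ →₀ ℍ[ℝ], ∀ M : ℕ,
        ∑ n ∈ Finset.range M, ‖∑ k ∈ Finset.range (n + 1), S' (n - k) * f k‖ ^ 2 ≤
          ∑ k ∈ f.support, ‖f k‖ ^ 2) ∧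
      (∀ t ∈ Set.Ioo (-1 : ℝ) 1, Summable fun n => t ^ n • S' n) ∧
      (∀ t ∈ Set.Ioo (-1 : ℝ) 1, t ≠ 0 →
        (∑' n, t ^ n • S' n) =
          t⁻¹ • (((∑' n, t ^ n • S n) - S 0) *
            ((1 : ℍ[ℝ]) - star (S 0) * (∑' n, t ^ n • S n))⁻¹)) := by
  have hS : IsToeplitzContraction S := hcontr
  have hS' := isToeplitzContraction_schurStep hS hS0
  have habs : ∀ t ∈ Set.Ioo (-1 : ℝ) 1, |t| < 1 := fun t ht => abs_lt.mpr ht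
  have hsum : ∀ t ∈ Set.Ioo (-1 : ℝ) 1, Summable fun n => t ^ n • S n := fun t ht =>
    (summable_norm_pow_smul_of_norm_le hS.norm_le_one (habs t ht)).of_norm
  have hinv := fun t ht => hS.one_sub_star_mul_tsum_mul_evalAt_inverse hS0 (habs t ht)
  refine ⟨hsum, fun t ht => left_ne_zero_of_mul_eq_one (hinv t ht), schurStep S, hS',
    fun t ht => (summable_norm_pow_smul_of_norm_le hS'.norm_le_one (habs t ht)).of_norm,
    fun t ht ht0 => ?_⟩
  rw [inv_eq_of_mul_eq_one_right (hinv t ht), tsum_pow_smul_eq_add (hsum t ht),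
    add_sub_cancel_left, smul_mul_assoc, inv_smul_smul₀ ht0, hS.tsum_schurStep hS0 (habs t ht)]
end
end
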